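/- arXiv:1601.05491 — 3 statements merged into one kernel-verified Lean document; each statement's English description precedes it below -/
import Mathlib

section
/- Let p be a positive nonsquare integer and let m, n be positive integers satisfying n² − p·m² = 1. Then √p = (n/m) · Σ_{k=0}^{∞} ((1/2)_k / k!) · (−1/(p·m²))^k, where the series on the right converges. -/
/-!
The series is the binomial series `₁F₀(1/2; ; z) = (1 - z) ^ (-1/2)` evaluated at
`z = -1 / (p m²)`. The Pell equation gives `1 - z = n² / (p m²)`, hence `(1 - z) ^ (-1/2) = m √p / n`,
and `p m² = n² - 1 > 1` puts `z` inside the disc of convergence.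
-/

/-- The shifted factorial (Pochhammer symbol): `(x)_0 = 1` and
`(x)_n = x * (x+1) * ... * (x+n-1)`. -/
noncomputable def shiftedFactorial (x : ℝ) (n : ℕ) : ℝ :=
  ∏ i ∈ Finset.range n, (x + i)

open Polynomial
open scoped Nat

theorem shiftedFactorial_eq_ascPochhammer_eval (x : ℝ) (k : ℕ) :
    shiftedFactorial x k = (ascPochhammer ℝ k).eval x := by
  induction k with
  | zero => simp [shiftedFactorial]
  | succ k ih =>
    rw [shiftedFactorial, Finset.prod_range_succ, ← shiftedFactorial, ih, ascPochhammer_succ_eval]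

theorem Ring.choose_neg_eq_shiftedFactorial (x : ℝ) (k : ℕ) :
    Ring.choose (-x) k = (-1) ^ k * shiftedFactorial x k / k ! := by
  rw [Ring.choose_neg', shiftedFactorial_eq_ascPochhammer_eval, ← ascPochhammer_smeval_eq_eval,
    ← Ring.factorial_nsmul_multichoose_eq_ascPochhammer, Int.negOnePow_def, nsmul_eq_mul]
  field_simp
  simp [Units.smul_def]

theorem Real.hasSum_choose_mul_pow (a : ℝ) {x : ℝ} (hx : |x| < 1) :
    HasSum (fun k ↦ Ring.choose a k * x ^ k) ((1 + x) ^ a) := by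
  have := Real.one_add_rpow_hasFPowerSeriesOnBall_zero (a := a) |>.hasSum
    (y := x) (by simpa [Real.enorm_eq_ofReal_abs] using hx)
  simpa [binomialSeries, FormalMultilinearSeries.coeff_ofScalars, mul_comm] using this

theorem hasSum_shiftedFactorial_div_factorial_mul_pow (a : ℝ) {z : ℝ} (hz : |z| < 1) :
    HasSum (fun k ↦ shiftedFactorial a k / k ! * z ^ k) ((1 - z) ^ (-a)) := by
  convert Real.hasSum_choose_mul_pow (-a) (x := -z) (by rwa [abs_neg]) using 1
  · ext k
    have hsign : ((-1 : ℝ) ^ k) ^ 2 = 1 := by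
      rw [← pow_mul, mul_comm, pow_mul, neg_one_sq, one_pow]
    rw [Ring.choose_neg_eq_shiftedFactorial, neg_pow]
    linear_combination -(shiftedFactorial a k / k ! * z ^ k) * hsign
  · rw [sub_eq_add_neg]

theorem Real.one_add_one_div_rpow_neg_half {q n : ℝ} (hq : 0 < q) (hn : 0 ≤ n)
    (h : n ^ 2 = q + 1) : (1 + 1 / q) ^ (-(1 / 2 : ℝ)) = √q / n := by
  have hinv : 1 + 1 / q = (q / n ^ 2)⁻¹ := by
    rw [inv_div, h]
    field_simp
  rw [hinv, Real.rpow_neg (by positivity), Real.inv_rpow (by positivity), inv_inv,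
    ← Real.sqrt_eq_rpow, Real.sqrt_div' _ (by positivity), Real.sqrt_sq hn]

theorem one_lt_mul_sq_of_sq_sub_mul_sq_eq_one {d x y : ℕ} (hd : 0 < d) (hy : 0 < y)
    (h : (x : ℤ) ^ 2 - d * y ^ 2 = 1) : 1 < d * y ^ 2 := by
  refine lt_of_le_of_ne (Nat.one_le_iff_ne_zero.2 (by positivity)) fun h1 ↦ ?_
  have hx : x ^ 2 = 2 := by
    zify at h1 ⊢
    linarith
  rcases Nat.lt_or_ge x 2 with hx2 | hx2
  · interval_cases x <;> simp at hx
  · nlinarith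

theorem sqrt_series_1F0_neg_general (p m n : ℕ) (hp : 0 < p)
    (hm : 0 < m) (hpell : (n : ℤ) ^ 2 - p * m ^ 2 = 1) :
    Summable (fun k : ℕ => shiftedFactorial (1/2) k / (Nat.factorial k : ℝ) * (-(1 / (p * m ^ 2)) : ℝ) ^ k) ∧
    Real.sqrt p = (n / m : ℝ) *
      ∑' k : ℕ, shiftedFactorial (1/2) k / (Nat.factorial k : ℝ) * (-(1 / (p * m ^ 2)) : ℝ) ^ k := by
  have hpm : (1 : ℝ) < p * m ^ 2 := by
    exact_mod_cast one_lt_mul_sq_of_sq_sub_mul_sq_eq_one hp hm hpell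
  have hz : |-(1 / (p * m ^ 2) : ℝ)| < 1 := by
    rw [abs_neg, abs_of_pos (by positivity)]
    exact (div_lt_one (by positivity)).2 hpm
  have hsum := hasSum_shiftedFactorial_div_factorial_mul_pow (1 / 2) hz
  refine ⟨hsum.summable, ?_⟩
  have hn : (n : ℝ) ^ 2 = p * m ^ 2 + 1 := by
    exact_mod_cast (by linarith : (n : ℤ) ^ 2 = p * m ^ 2 + 1)
  have hn0 : (n : ℝ) ≠ 0 := fun h ↦ by nlinarith [h ▸ hn]
  rw [hsum.tsum_eq, sub_neg_eq_add, Real.one_add_one_div_rpow_neg_half (by positivity)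
    (by positivity) hn, Real.sqrt_mul' _ (by positivity), Real.sqrt_sq (by positivity)]
  field_simp

theorem sqrt_series_1F0_neg (p m n : ℕ) (hp : 0 < p) (hps : ¬ IsSquare p)
    (hm : 0 < m) (hn : 0 < n) (hpell : (n : ℤ) ^ 2 - p * m ^ 2 = 1) :
    Summable (fun k : ℕ => shiftedFactorial (1/2) k / (Nat.factorial k : ℝ) * (-(1 / (p * m ^ 2)) : ℝ) ^ k) ∧
    Real.sqrt p = (n / m : ℝ) *
      ∑' k : ℕ, shiftedFactorial (1/2) k / (Nat.factorial k : ℝ) * (-(1 / (p * m ^ 2)) : ℝ) ^ k :=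
  sqrt_series_1F0_neg_general p m n hp hm hpell
end

section
/- Let p be a positive nonsquare integer and let m, n be positive integers satisfying n² − p·m² = 1 and 4·(p·m² + 1)³ > 27·p²·m⁴. Then √p = (m·p/n) · Σ_{k=0}^{∞} ((1/2)_k (1/6)_k (5/6)_k / (k! (3/4)_k (5/4)_k)) · (27·p²·m⁴/(4·(p·m² + 1)³))^k, where the series on the right converges. -/
/-!
The numbers `raney k x = x (x + 2k + 1) (x + 2k + 2) ⋯ (x + 3k - 1) / k!` are the Taylor
coefficients of `B(w) ^ x`, where `B = 1 + w B³` is the generating function of ternary trees.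
The exponential law `raney (x + y) = raney x ⋆ raney y` (Cauchy product) follows from the
difference equation `raney (k+1) (x+1) = raney (k+1) x + raney k (x+3)`, which makes the defect
a 1-periodic polynomial in `x`. Hence the `x = 1/2` series squares to `B`. At `w = u (1 - u)²`
with `u < 1/3`, both `B` and `1/(1-u)` solve `t = 1 + w t³`, and they agree because the truncations
of `B` satisfy `T_{N+1} ≤ 1 + w T_N³` and so stay below the smaller root. The summand of the
theorem is `raney k (1/2) (u (1 - u)²)^k` for `u = 1/n²`, and the Pell equation gives
`1 - u = p m² / n²`.
-/

open Finset Polynomial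
open scoped Nat

section ShiftedFactorial

variable (x : ℝ) (n : ℕ)

lemma shiftedFactorial_zero : shiftedFactorial x 0 = 1 := prod_range_zero _

lemma shiftedFactorial_succ : shiftedFactorial x (n + 1) = shiftedFactorial x n * (x + n) :=
  prod_range_succ _ _

lemma shiftedFactorial_succ' : shiftedFactorial x (n + 1) = x * shiftedFactorial (x + 1) n := by
  simp only [shiftedFactorial, prod_range_succ', Nat.cast_add, Nat.cast_one, Nat.cast_zero,
    add_zero]
  rw [mul_comm]
  congr 1
  exact prod_congr rfl fun i _ => by ring

lemma mul_shiftedFactorial_add_two :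
    x * (x + 1) * shiftedFactorial (x + 2) (n + 1) =
      shiftedFactorial x n * ((x + n) * (x + n + 1) * (x + n + 2)) := by
  have h := shiftedFactorial_succ' x (n + 2)
  rw [shiftedFactorial_succ' (x + 1) (n + 1), add_assoc x 1 1, one_add_one_eq_two,
    shiftedFactorial_succ, shiftedFactorial_succ, shiftedFactorial_succ] at h
  push_cast at h
  linear_combination -h

variable {x}

lemma shiftedFactorial_pos (hx : 0 < x) : 0 < shiftedFactorial x n :=
  prod_pos fun i _ => by positivity

lemma shiftedFactorial_le_of_le {y : ℝ} (hx : 0 ≤ x) (hxy : x ≤ y) :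
    shiftedFactorial x n ≤ shiftedFactorial y n :=
  prod_le_prod (fun i _ => by positivity) fun i _ => by linarith

end ShiftedFactorial

noncomputable def raneyPoly : ℕ → ℝ[X]
  | 0 => 1
  | k + 1 => C ((k + 1)! : ℝ)⁻¹ * X * ∏ i ∈ range k, (X + C (2 * k + 3 + i : ℝ))

noncomputable def raney (k : ℕ) (x : ℝ) : ℝ := (raneyPoly k).eval x

lemma raney_zero (x : ℝ) : raney 0 x = 1 := by simp [raney, raneyPoly]

lemma raney_succ (k : ℕ) (x : ℝ) :
    raney (k + 1) x = x * shiftedFactorial (x + (2 * k + 3)) k / (k + 1)! := by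
  simp [raney, raneyPoly, eval_prod, shiftedFactorial, add_assoc]
  ring

lemma raney_one (x : ℝ) : raney 1 x = x := by simp [raney_succ, shiftedFactorial_zero]

lemma raney_succ_zero (k : ℕ) : raney (k + 1) 0 = 0 := by simp [raney_succ]

lemma raney_nonneg (k : ℕ) {x : ℝ} (hx : 0 ≤ x) : 0 ≤ raney k x := by
  cases k with
  | zero => simp [raney_zero]
  | succ k =>
    rw [raney_succ]
    have := (shiftedFactorial_pos k (x := x + (2 * k + 3)) (by positivity)).le
    positivity

lemma raney_le_of_le (k : ℕ) {x y : ℝ} (hx : 0 ≤ x) (hxy : x ≤ y) : raney k x ≤ raney k y := by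
  cases k with
  | zero => simp [raney_zero]
  | succ k =>
    rw [raney_succ, raney_succ]
    gcongr
    · exact (shiftedFactorial_pos k (by positivity)).le
    · linarith
    · exact shiftedFactorial_le_of_le k (by positivity) (by linarith)

lemma raney_succ_add_one (k : ℕ) (x : ℝ) :
    raney (k + 1) (x + 1) = raney (k + 1) x + raney k (x + 3) := by
  cases k with
  | zero => simp [raney_one, raney_zero]
  | succ j =>
    rw [raney_succ, raney_succ, raney_succ, Nat.factorial_succ (j + 1),
      show x + 1 + (2 * ↑(j + 1) + 3) = x + (2 * j + 6) by push_cast; ring,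
      show x + (2 * ↑(j + 1) + 3) = x + (2 * j + 5) by push_cast; ring,
      show x + 3 + (2 * j + 3) = x + (2 * j + 6) by ring,
      shiftedFactorial_succ, shiftedFactorial_succ',
      show x + (2 * j + 5) + 1 = x + (2 * j + 6) by ring]
    generalize shiftedFactorial (x + (2 * j + 6)) j = S
    push_cast
    field_simp
    ring

lemma raney_succ_one (k : ℕ) : raney (k + 1) 1 = raney k 3 := by
  simpa [raney_succ_zero] using raney_succ_add_one k 0

lemma raney_succ_mul (k : ℕ) (x : ℝ) :
    (k + 1) * (x + 2 * k + 1) * (x + 2 * k + 2) * raney (k + 1) x =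
      (x + 3 * k) * (x + 3 * k + 1) * (x + 3 * k + 2) * raney k x := by
  cases k with
  | zero => simp [raney_one, raney_zero]; ring
  | succ j =>
    rw [raney_succ, raney_succ, Nat.factorial_succ (j + 1),
      show x + (2 * ↑(j + 1) + 3) = x + (2 * j + 3) + 2 by push_cast; ring]
    have h := mul_shiftedFactorial_add_two (x + (2 * j + 3)) j
    generalize shiftedFactorial (x + (2 * j + 3) + 2) (j + 1) = S at h ⊢
    generalize shiftedFactorial (x + (2 * j + 3)) j = T at h ⊢
    push_cast
    field_simp
    linear_combination x * h

theorem Polynomial.eq_zero_of_eval_add_one_eq {R : Type*} [CommRing R] [IsDomain R] [CharZero R]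
    {Q : R[X]} (hper : ∀ t, Q.eval (t + 1) = Q.eval t) (h0 : Q.eval 0 = 0) : Q = 0 := by
  have hnat : ∀ m : ℕ, Q.eval (m : R) = 0 := by
    intro m
    induction m with
    | zero => simpa using h0
    | succ m ih => rwa [Nat.cast_succ, hper]
  refine Q.eq_zero_of_infinite_isRoot ((Set.infinite_range_of_injective Nat.cast_injective).mono ?_)
  rintro _ ⟨m, rfl⟩
  exact hnat m

lemma raney_add (j : ℕ) (x y : ℝ) :
    ∑ k ∈ range (j + 1), raney k x * raney (j - k) y = raney j (x + y) := by
  induction j generalizing x with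
  | zero => simp [raney_zero]
  | succ j ih =>
    set Q : ℝ[X] := ∑ k ∈ range (j + 2), raneyPoly k * C (raney (j + 1 - k) y) -
      (raneyPoly (j + 1)).comp (X + C y) with hQ
    have hQ_eval : ∀ t, Q.eval t =
        ∑ k ∈ range (j + 2), raney k t * raney (j + 1 - k) y - raney (j + 1) (t + y) := by
      intro t
      simp [hQ, eval_finsetSum, raney]
    suffices Q = 0 by simpa [hQ_eval, sub_eq_zero] using congr_arg (eval x) this
    refine eq_zero_of_eval_add_one_eq (fun t => ?_) ?_
    · have hshift := raney_succ_add_one j (t + y)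
      rw [hQ_eval, hQ_eval, sum_range_succ', sum_range_succ' _ (j + 1)]
      simp only [raney_succ_add_one, add_mul, sum_add_distrib, Nat.succ_sub_succ, ih, raney_zero]
      rw [show t + 1 + y = t + y + 1 by ring, show t + 3 + y = t + y + 3 by ring]
      linarith
    · rw [hQ_eval, sum_range_succ']
      simp [raney_zero, raney_succ_zero]

lemma sum_range_sum_mul_sub_le {f g : ℕ → ℝ} (hf : 0 ≤ f) (hg : 0 ≤ g) (n : ℕ) :
    ∑ m ∈ range n, ∑ k ∈ range (m + 1), f k * g (m - k) ≤
      (∑ m ∈ range n, f m) * ∑ m ∈ range n, g m := by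
  rw [sum_range_diag_flip n fun i j => f i * g j, sum_mul_sum]
  gcongr with i
  · exact fun j _ _ => mul_nonneg (hf i) (hg j)
  · exact Nat.sub_le n i

section Series

variable {w : ℝ}

lemma raney_mul_pow_nonneg {a : ℝ} (ha : 0 ≤ a) (hw : 0 ≤ w) (k : ℕ) : 0 ≤ raney k a * w ^ k :=
  mul_nonneg (raney_nonneg k ha) (pow_nonneg hw k)

lemma sum_range_raney_mul_raney (x y : ℝ) (j : ℕ) :
    ∑ k ∈ range (j + 1), raney k x * w ^ k * (raney (j - k) y * w ^ (j - k)) =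
      raney j (x + y) * w ^ j := by
  rw [← raney_add, sum_mul]
  refine sum_congr rfl fun k hk => ?_
  rw [mul_mul_mul_comm, ← pow_add, Nat.add_sub_cancel' (Nat.le_of_lt_succ (mem_range.mp hk))]

lemma sum_range_raney_add_le {x y : ℝ} (hx : 0 ≤ x) (hy : 0 ≤ y) (hw : 0 ≤ w) (n : ℕ) :
    ∑ k ∈ range n, raney k (x + y) * w ^ k ≤
      (∑ k ∈ range n, raney k x * w ^ k) * ∑ k ∈ range n, raney k y * w ^ k := by
  simpa only [sum_range_raney_mul_raney] using
    sum_range_sum_mul_sub_le (raney_mul_pow_nonneg hx hw) (raney_mul_pow_nonneg hy hw) n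

lemma sum_range_raney_three_le (hw : 0 ≤ w) (n : ℕ) :
    ∑ k ∈ range n, raney k 3 * w ^ k ≤ (∑ k ∈ range n, raney k 1 * w ^ k) ^ 3 := by
  set T := ∑ k ∈ range n, raney k 1 * w ^ k
  have hT : 0 ≤ T := sum_nonneg fun k _ => raney_mul_pow_nonneg zero_le_one hw k
  have h2 := sum_range_raney_add_le zero_le_one zero_le_one hw n
  have h3 := sum_range_raney_add_le zero_le_one zero_le_two hw n
  norm_num at h2 h3
  calc _ ≤ T * ∑ k ∈ range n, raney k 2 * w ^ k := h3
    _ ≤ T * T ^ 2 := by rw [sq]; gcongr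
    _ = T ^ 3 := by ring

lemma sum_range_raney_one_le {β : ℝ} (hw : 0 ≤ w) (hβ : 0 ≤ β) (hβw : 1 + w * β ^ 3 ≤ β)
    (n : ℕ) : ∑ k ∈ range n, raney k 1 * w ^ k ≤ β := by
  induction n with
  | zero => simpa using hβ
  | succ n ih =>
    have hT : 0 ≤ ∑ k ∈ range n, raney k 1 * w ^ k :=
      sum_nonneg fun k _ => raney_mul_pow_nonneg zero_le_one hw k
    have hshift : ∑ k ∈ range (n + 1), raney k 1 * w ^ k =
        1 + w * ∑ k ∈ range n, raney k 3 * w ^ k := by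
      rw [sum_range_succ', raney_zero, pow_zero, mul_one, add_comm, mul_sum]
      congr 1
      exact sum_congr rfl fun k _ => by rw [raney_succ_one, pow_succ]; ring
    calc ∑ k ∈ range (n + 1), raney k 1 * w ^ k
        ≤ 1 + w * (∑ k ∈ range n, raney k 1 * w ^ k) ^ 3 := by
          rw [hshift]; gcongr; exact sum_range_raney_three_le hw n
      _ ≤ 1 + w * β ^ 3 := by gcongr
      _ ≤ β := hβw

lemma summable_raney {a : ℝ} (ha : 0 ≤ a) (ha3 : a ≤ 3) (hw : 0 ≤ w) (hw4 : w ≤ 4 / 27) :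
    Summable fun k => raney k a * w ^ k := by
  have hβw : 1 + w * (3 / 2) ^ 3 ≤ 3 / 2 := by linarith
  refine summable_of_sum_range_le (c := (3 / 2) ^ 3) (raney_mul_pow_nonneg ha hw) fun n => ?_
  calc ∑ k ∈ range n, raney k a * w ^ k ≤ ∑ k ∈ range n, raney k 3 * w ^ k :=
        sum_le_sum fun k _ => mul_le_mul_of_nonneg_right (raney_le_of_le k ha ha3) (pow_nonneg hw k)
    _ ≤ (∑ k ∈ range n, raney k 1 * w ^ k) ^ 3 := sum_range_raney_three_le hw n
    _ ≤ (3 / 2) ^ 3 := by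
        gcongr
        · exact sum_nonneg fun k _ => raney_mul_pow_nonneg zero_le_one hw k
        · exact sum_range_raney_one_le hw (by norm_num) hβw n

lemma tsum_raney_mul_tsum_raney {a b : ℝ} (ha : 0 ≤ a) (ha3 : a ≤ 3) (hb : 0 ≤ b) (hb3 : b ≤ 3)
    (hw : 0 ≤ w) (hw4 : w ≤ 4 / 27) :
    (∑' k, raney k a * w ^ k) * ∑' k, raney k b * w ^ k = ∑' k, raney k (a + b) * w ^ k := by
  have hsa := summable_raney ha ha3 hw hw4
  have hsb := summable_raney hb hb3 hw hw4
  simp only [hsa.tsum_mul_tsum_eq_tsum_sum_range hsb (hsa.mul_of_nonneg hsb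
    (raney_mul_pow_nonneg ha hw) (raney_mul_pow_nonneg hb hw)), sum_range_raney_mul_raney]

lemma tsum_raney_one_eq (hw : 0 ≤ w) (hw4 : w ≤ 4 / 27) :
    ∑' k, raney k 1 * w ^ k = 1 + w * (∑' k, raney k 1 * w ^ k) ^ 3 := by
  have hcube : (∑' k, raney k 1 * w ^ k) ^ 3 = ∑' k, raney k 3 * w ^ k := by
    rw [pow_succ', sq, tsum_raney_mul_tsum_raney zero_le_one (by norm_num) zero_le_one
      (by norm_num) hw hw4, one_add_one_eq_two, tsum_raney_mul_tsum_raney zero_le_one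
      (by norm_num) zero_le_two (by norm_num) hw hw4]
    norm_num
  rw [hcube, (summable_raney zero_le_one (by norm_num) hw hw4).tsum_eq_zero_add, raney_zero,
    pow_zero, mul_one, ← tsum_mul_left]
  simp only [raney_succ_one, pow_succ]
  congr 1
  exact tsum_congr fun k => by ring

end Series

section Parametrized

variable {u : ℝ}

lemma mul_one_sub_sq_le (hu : u ≤ 4 / 3) : u * (1 - u) ^ 2 ≤ 4 / 27 := by
  nlinarith [mul_nonneg (sq_nonneg (u - 1 / 3)) (by linarith : (0 : ℝ) ≤ 4 / 3 - u)]

lemma tsum_raney_one_eq_inv (hu0 : 0 ≤ u) (hu : u < 1 / 3) :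
    ∑' k, raney k 1 * (u * (1 - u) ^ 2) ^ k = (1 - u)⁻¹ := by
  set w := u * (1 - u) ^ 2
  set S := ∑' k, raney k 1 * w ^ k
  set β := (1 - u)⁻¹
  have hw : 0 ≤ w := by positivity
  have hw4 : w ≤ 4 / 27 := mul_one_sub_sq_le (by linarith)
  have hβ : 0 ≤ β := inv_nonneg.mpr (by linarith)
  have hwβ : w * β ^ 2 = u := by
    simp only [w, β]
    field_simp [show 1 - u ≠ 0 by linarith]
  have hβ_eq : β = 1 + w * β ^ 3 := by
    simp only [w, β]
    field_simp [show 1 - u ≠ 0 by linarith]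
    ring
  have hS : 0 ≤ S := tsum_nonneg (raney_mul_pow_nonneg zero_le_one hw)
  have hSβ : S ≤ β := Real.tsum_le_of_sum_range_le (raney_mul_pow_nonneg zero_le_one hw)
    (sum_range_raney_one_le hw hβ hβ_eq.ge)
  have hfactor : (β - S) * (1 - w * (β ^ 2 + β * S + S ^ 2)) = 0 := by
    linear_combination hβ_eq - tsum_raney_one_eq hw hw4
  have hsmall : w * (β ^ 2 + β * S + S ^ 2) < 1 := by
    have : β ^ 2 + β * S + S ^ 2 ≤ 3 * β ^ 2 := by nlinarith
    nlinarith
  rcases mul_eq_zero.mp hfactor with h | h <;> linarith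

lemma tsum_raney_half_eq_inv_sqrt (hu0 : 0 ≤ u) (hu : u < 1 / 3) :
    ∑' k, raney k (1 / 2) * (u * (1 - u) ^ 2) ^ k = (√(1 - u))⁻¹ := by
  have hw : 0 ≤ u * (1 - u) ^ 2 := by positivity
  have hw4 : u * (1 - u) ^ 2 ≤ 4 / 27 := mul_one_sub_sq_le (by linarith)
  have hsq : (∑' k, raney k (1 / 2) * (u * (1 - u) ^ 2) ^ k) ^ 2 = (1 - u)⁻¹ := by
    rw [sq, tsum_raney_mul_tsum_raney (by norm_num) (by norm_num) (by norm_num) (by norm_num)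
      hw hw4]
    norm_num [tsum_raney_one_eq_inv hu0 hu]
  rw [← Real.sqrt_inv, ← hsq, Real.sqrt_sq]
  exact tsum_nonneg (raney_mul_pow_nonneg (by norm_num) hw)

end Parametrized

lemma hypergeometric_coeff_mul_pow_eq_raney_half (k : ℕ) :
    shiftedFactorial (1 / 2) k * shiftedFactorial (1 / 6) k * shiftedFactorial (5 / 6) k /
        ((k ! : ℝ) * shiftedFactorial (3 / 4) k * shiftedFactorial (5 / 4) k) * (27 / 4) ^ k =
      raney k (1 / 2) := by
  induction k with
  | zero => simp [shiftedFactorial_zero, raney_zero]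
  | succ k ih =>
    have hrec := raney_succ_mul k (1 / 2)
    rw [← ih] at hrec
    have hA : ((k : ℝ) + 1) * (1 / 2 + 2 * k + 1) * (1 / 2 + 2 * k + 2) ≠ 0 := by positivity
    refine mul_left_cancel₀ hA (Eq.trans ?_ hrec.symm)
    simp only [shiftedFactorial_succ, Nat.factorial_succ, pow_succ]
    generalize shiftedFactorial (1 / 2) k = a at *
    push_cast
    field_simp
    ring

lemma two_le_of_sq_sub_mul_sq_eq_one {p m n : ℕ} (hp : 0 < p) (hm : 0 < m)
    (h : (n : ℤ) ^ 2 - p * m ^ 2 = 1) : 2 ≤ n := by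
  have h' : n ^ 2 = p * m ^ 2 + 1 := by zify; linarith
  have : 1 ≤ p * m ^ 2 := Nat.mul_pos hp (pow_pos hm 2)
  nlinarith

lemma sqrt_eq_mul_div_mul_inv_sqrt {p m n : ℝ} (hp : 0 < p) (hm : 0 < m) (hn : 0 < n) :
    √p = m * p / n * (√(p * m ^ 2 / n ^ 2))⁻¹ := by
  have hsp : 0 < √p := Real.sqrt_pos.mpr hp
  rw [Real.sqrt_div' _ (by positivity), Real.sqrt_mul' _ (by positivity), Real.sqrt_sq hm.le,
    Real.sqrt_sq hn.le]
  field_simp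
  rw [Real.sq_sqrt hp.le]

theorem sqrt_series_3F2_pos_general (p m n : ℕ) (hp : 0 < p)
    (hm : 0 < m) (hpell : (n : ℤ) ^ 2 - p * m ^ 2 = 1) :
    Summable (fun k : ℕ => shiftedFactorial (1/2) k * shiftedFactorial (1/6) k * shiftedFactorial (5/6) k / ((Nat.factorial k : ℝ) * shiftedFactorial (3/4) k * shiftedFactorial (5/4) k) * (27 * p ^ 2 * m ^ 4 / (4 * (p * m ^ 2 + 1) ^ 3) : ℝ) ^ k) ∧
    Real.sqrt p = (m * p / n : ℝ) *
      ∑' k : ℕ, shiftedFactorial (1/2) k * shiftedFactorial (1/6) k * shiftedFactorial (5/6) k / ((Nat.factorial k : ℝ) * shiftedFactorial (3/4) k * shiftedFactorial (5/4) k) * (27 * p ^ 2 * m ^ 4 / (4 * (p * m ^ 2 + 1) ^ 3) : ℝ) ^ k := by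
  have hn := two_le_of_sq_sub_mul_sq_eq_one hp hm hpell
  have hnR : (n : ℝ) ^ 2 = p * m ^ 2 + 1 := by
    exact_mod_cast (by linarith : (n : ℤ) ^ 2 = p * m ^ 2 + 1)
  set u : ℝ := ((n : ℝ) ^ 2)⁻¹
  have hu0 : 0 ≤ u := by positivity
  have hu : u < 1 / 3 := by
    have : (4 : ℝ) ≤ (n : ℝ) ^ 2 := by exact_mod_cast Nat.pow_le_pow_left hn 2
    rw [inv_lt_comm₀ (by positivity) (by norm_num)]
    linarith
  have h1u : 1 - u = p * m ^ 2 / n ^ 2 := by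
    rw [eq_div_iff (by positivity), sub_mul, inv_mul_cancel₀ (by positivity)]
    linarith
  have hz : (27 * p ^ 2 * m ^ 4 / (4 * (p * m ^ 2 + 1) ^ 3) : ℝ) = 27 / 4 * (u * (1 - u) ^ 2) := by
    rw [h1u, ← hnR]
    simp only [u]
    field_simp
  rw [hz]
  simp only [mul_pow (27 / 4 : ℝ)]
  simp only [← mul_assoc, hypergeometric_coeff_mul_pow_eq_raney_half]
  refine ⟨summable_raney (by norm_num) (by norm_num) (by positivity)
    (mul_one_sub_sq_le (by linarith)), ?_⟩
  rw [tsum_raney_half_eq_inv_sqrt hu0 hu, h1u]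
  exact sqrt_eq_mul_div_mul_inv_sqrt (by positivity) (by positivity) (by positivity)

theorem sqrt_series_3F2_pos (p m n : ℕ) (hp : 0 < p) (hps : ¬ IsSquare p)
    (hm : 0 < m) (hn : 0 < n) (hpell : (n : ℤ) ^ 2 - p * m ^ 2 = 1)
    (hextra : 4 * ((p : ℤ) * m ^ 2 + 1) ^ 3 > 27 * p ^ 2 * m ^ 4) :
    Summable (fun k : ℕ => shiftedFactorial (1/2) k * shiftedFactorial (1/6) k * shiftedFactorial (5/6) k / ((Nat.factorial k : ℝ) * shiftedFactorial (3/4) k * shiftedFactorial (5/4) k) * (27 * p ^ 2 * m ^ 4 / (4 * (p * m ^ 2 + 1) ^ 3) : ℝ) ^ k) ∧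
    Real.sqrt p = (m * p / n : ℝ) *
      ∑' k : ℕ, shiftedFactorial (1/2) k * shiftedFactorial (1/6) k * shiftedFactorial (5/6) k / ((Nat.factorial k : ℝ) * shiftedFactorial (3/4) k * shiftedFactorial (5/4) k) * (27 * p ^ 2 * m ^ 4 / (4 * (p * m ^ 2 + 1) ^ 3) : ℝ) ^ k :=
  sqrt_series_3F2_pos_general p m n hp hm hpell
end

section
/- The following series identity holds: √7 = (2024/765) · Σ_{k=0}^{∞} ((1/4)_k (3/4)_k / (k! (3/2)_k)) · (−16386304/16781926730625)^k, where the series on the right converges. -/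
/-!
The coefficient `(1/4)_k (3/4)_k / (k! (3/2)_k)` equals `C_{2k} / 16^k` (Pochhammer duplication
`(x)_k (x + 1/2)_k 4^k = (2x)_{2k}`), so the series is `A = ∑ C_{2k} y^k` with
`y = -1024144/16781926730625`. The Catalan generating function `c(t) = ∑ C_n t^n` satisfies
`c = 1 + t c²`; taking `t ∈ ℂ` with `t² = y`, we have `c(t) + c(-t) = 2A`, and eliminating
`c(±t)` gives `A² - 1 = 4 y A⁴`. For this `y` the only nonnegative solution is
`A² = 4096575/4096576 = (765 √7 / 2024)²`, and `A > 0` because `|y|` is small.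
-/

open Finset Nat

namespace shiftedFactorial

theorem succ (x : ℝ) (n : ℕ) :
    shiftedFactorial x (n + 1) = shiftedFactorial x n * (x + n) :=
  prod_range_succ _ n

theorem succ' (x : ℝ) (n : ℕ) :
    shiftedFactorial x (n + 1) = x * shiftedFactorial (x + 1) n := by
  simp only [shiftedFactorial, prod_range_succ', Nat.cast_succ, Nat.cast_zero, add_zero]
  rw [mul_comm]
  congr 1
  exact prod_congr rfl fun i _ => by ring

theorem one (n : ℕ) : shiftedFactorial 1 n = n ! := by
  rw [shiftedFactorial, ← prod_range_add_one_eq_factorial]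
  push_cast
  exact prod_congr rfl fun i _ => add_comm _ _

theorem two (n : ℕ) : shiftedFactorial 2 n = (n + 1)! := by
  simpa [one, one_add_one_eq_two] using (succ' 1 n).symm

theorem mul_shiftedFactorial_add_half (x : ℝ) (k : ℕ) :
    shiftedFactorial x k * shiftedFactorial (x + 1 / 2) k * 4 ^ k =
      shiftedFactorial (2 * x) (2 * k) := by
  induction k with
  | zero => simp [shiftedFactorial]
  | succ k ih =>
    rw [show 2 * (k + 1) = 2 * k + 1 + 1 by ring, succ, succ, succ, succ, ← ih]
    push_cast
    ring

theorem half_mul_four_pow (n : ℕ) :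
    shiftedFactorial (1 / 2) n * 4 ^ n = n.centralBinom * n ! := by
  induction n with
  | zero => simp [shiftedFactorial]
  | succ n ih =>
    have h : ((n + 1 : ℕ) : ℝ) * (n + 1).centralBinom = 2 * (2 * n + 1) * n.centralBinom := by
      exact_mod_cast Nat.succ_mul_centralBinom_succ n
    rw [succ, Nat.factorial_succ, pow_succ]
    push_cast at h ⊢
    linear_combination 4 * (1 / 2 + n : ℝ) * ih - (n ! : ℝ) * h

theorem half_div_two (n : ℕ) :
    shiftedFactorial (1 / 2) n / shiftedFactorial 2 n = catalan n / 4 ^ n := by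
  have h : ((n + 1 : ℕ) : ℝ) * catalan n = n.centralBinom := by
    exact_mod_cast succ_mul_catalan_eq_centralBinom n
  rw [two, div_eq_div_iff (by positivity) (by positivity), half_mul_four_pow,
    Nat.factorial_succ, ← h]
  push_cast
  ring

end shiftedFactorial

theorem shiftedFactorial_quarter_div_eq_catalan (k : ℕ) :
    shiftedFactorial (1 / 4) k * shiftedFactorial (3 / 4) k /
        ((k ! : ℝ) * shiftedFactorial (3 / 2) k) = catalan (2 * k) / 16 ^ k := by
  have hnum := shiftedFactorial.mul_shiftedFactorial_add_half (1 / 4) k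
  have hden := shiftedFactorial.mul_shiftedFactorial_add_half 1 k
  norm_num only at hnum hden
  rw [← shiftedFactorial.one, show (16 : ℝ) ^ k = 4 ^ (2 * k) by rw [pow_mul]; norm_num,
    ← shiftedFactorial.half_div_two, ← hnum, ← hden, mul_div_mul_right _ _ (by positivity)]

theorem catalan_le_four_pow (n : ℕ) : catalan n ≤ 4 ^ n :=
  calc catalan n ≤ (n + 1) * catalan n := Nat.le_mul_of_pos_left _ n.succ_pos
    _ = n.centralBinom := succ_mul_catalan_eq_centralBinom n
    _ ≤ 4 ^ n := centralBinom_le_four_pow n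

section CatalanSeries

variable {𝕜 : Type*} [NormedField 𝕜]

theorem norm_catalan_le_four_pow (n : ℕ) : ‖(catalan n : 𝕜)‖ ≤ 4 ^ n :=
  calc ‖(catalan n : 𝕜)‖ ≤ catalan n := by simpa using Nat.norm_cast_le (α := 𝕜) (catalan n)
    _ ≤ 4 ^ n := by exact_mod_cast catalan_le_four_pow n

theorem norm_catalan_mul_pow_le (t : 𝕜) (n : ℕ) :
    ‖(catalan n : 𝕜) * t ^ n‖ ≤ (4 * ‖t‖) ^ n := by
  rw [norm_mul, norm_pow, mul_pow]
  gcongr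
  exact norm_catalan_le_four_pow n

theorem norm_catalan_two_mul_mul_pow_le (y : 𝕜) (k : ℕ) :
    ‖(catalan (2 * k) : 𝕜) * y ^ k‖ ≤ (16 * ‖y‖) ^ k := by
  rw [norm_mul, norm_pow, mul_pow, show (16 : ℝ) ^ k = 4 ^ (2 * k) by rw [pow_mul]; norm_num]
  gcongr
  exact norm_catalan_le_four_pow (2 * k)

theorem summable_norm_catalan_mul_pow {t : 𝕜} (ht : 4 * ‖t‖ < 1) :
    Summable fun n => ‖(catalan n : 𝕜) * t ^ n‖ :=
  .of_nonneg_of_le (fun _ => norm_nonneg _) (norm_catalan_mul_pow_le t)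
    (summable_geometric_of_lt_one (by positivity) ht)

theorem summable_norm_catalan_two_mul_mul_pow {y : 𝕜} (hy : 16 * ‖y‖ < 1) :
    Summable fun k => ‖(catalan (2 * k) : 𝕜) * y ^ k‖ :=
  .of_nonneg_of_le (fun _ => norm_nonneg _) (norm_catalan_two_mul_mul_pow_le y)
    (summable_geometric_of_lt_one (by positivity) hy)

variable [CompleteSpace 𝕜]

theorem catalan_tsum_eq_one_add_mul_sq {t : 𝕜} (ht : 4 * ‖t‖ < 1) :
    ∑' n, (catalan n : 𝕜) * t ^ n = 1 + t * (∑' n, (catalan n : 𝕜) * t ^ n) ^ 2 := by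
  set c := ∑' n, (catalan n : 𝕜) * t ^ n
  have hs := summable_norm_catalan_mul_pow ht
  have hsq : HasSum (fun n => (catalan (n + 1) : 𝕜) * t ^ n) (c ^ 2) := by
    have h := (summable_norm_sum_mul_antidiagonal_of_summable_norm hs hs).of_norm.hasSum
    rw [← tsum_mul_tsum_eq_tsum_sum_antidiagonal_of_summable_norm hs hs, ← sq] at h
    refine h.congr_fun fun n => ?_
    rw [catalan_succ', Nat.cast_sum, sum_mul]
    refine sum_congr rfl fun ij hij => ?_
    rw [← mem_antidiagonal.mp hij, pow_add]
    push_cast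
    ring
  have hshift : HasSum (fun n => (catalan (n + 1) : 𝕜) * t ^ (n + 1)) (t * c ^ 2) :=
    (hsq.mul_left t).congr_fun fun n => by ring
  have := (hasSum_nat_add_iff (f := fun n => (catalan n : 𝕜) * t ^ n) 1).mp hshift
  simp only [range_one, sum_singleton, catalan_zero, Nat.cast_one, pow_zero, mul_one] at this
  rw [add_comm]
  exact this.tsum_eq

theorem catalan_tsum_add_catalan_tsum_neg {t : 𝕜} (ht : 4 * ‖t‖ < 1) :
    ∑' n, (catalan n : 𝕜) * t ^ n + ∑' n, (catalan n : 𝕜) * (-t) ^ n =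
      2 * ∑' k, (catalan (2 * k) : 𝕜) * (t ^ 2) ^ k := by
  have hp := (summable_norm_catalan_mul_pow ht).of_norm.hasSum
  have hq := (summable_norm_catalan_mul_pow (t := -t) (by rwa [norm_neg])).of_norm.hasSum
  have hsum := hp.add hq
  rw [← (mul_right_injective₀ (two_ne_zero' ℕ)).hasSum_iff] at hsum
  · rw [← hsum.tsum_eq, ← tsum_mul_left]
    congr 1
    ext k
    simp only [Function.comp_apply, Even.neg_pow (even_two_mul k), pow_mul]
    ring
  · rintro n hn
    have hodd : Odd n := (Nat.even_or_odd n).resolve_left fun ⟨m, hm⟩ => hn ⟨m, by dsimp only; omega⟩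
    simp only [hodd.neg_pow]
    ring

end CatalanSeries

theorem catalan_two_mul_tsum_sq_sub_one {y : ℝ} (hy : 16 * |y| < 1) :
    (∑' k, (catalan (2 * k) : ℝ) * y ^ k) ^ 2 - 1 =
      4 * y * (∑' k, (catalan (2 * k) : ℝ) * y ^ k) ^ 4 := by
  set A := ∑' k, (catalan (2 * k) : ℝ) * y ^ k
  obtain ⟨t, ht⟩ := IsAlgClosed.exists_pow_nat_eq (y : ℂ) two_pos
  have htnorm : 4 * ‖t‖ < 1 := by
    have : ‖t‖ ^ 2 = |y| := by rw [← norm_pow, ht, Complex.norm_real, Real.norm_eq_abs]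
    nlinarith [norm_nonneg t]
  have hp := catalan_tsum_eq_one_add_mul_sq htnorm
  have hq := catalan_tsum_eq_one_add_mul_sq (t := -t) (by rwa [norm_neg])
  have hpq := catalan_tsum_add_catalan_tsum_neg htnorm
  rw [ht, show ∑' k, (catalan (2 * k) : ℂ) * (y : ℂ) ^ k = (A : ℂ) by
    push_cast [A, Complex.ofReal_tsum]; rfl] at hpq
  set p := ∑' n, (catalan n : ℂ) * t ^ n
  set q := ∑' n, (catalan n : ℂ) * (-t) ^ n
  rw [show q = 2 * A - p by linear_combination hpq] at hq
  -- With `p = A + t B` and `q = A - t B` (even and odd parts), `hp ± hq` say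
  -- `A = 1 + 2 y A B` and `B = A² + y B²`; eliminating `B` gives the quartic.
  have : (A : ℂ) ^ 2 - 1 = 4 * t ^ 2 * (A : ℂ) ^ 4 := by
    linear_combination
      2 * t * (A : ℂ) ^ 2 * (hp - hq) + (A + 1 - t * A * (2 * p - 2 * A)) / 2 * (hp + hq)
  rw [ht] at this
  exact_mod_cast this

theorem catalan_two_mul_tsum_pos {y : ℝ} (hy : 32 * |y| < 1) :
    0 < ∑' k, (catalan (2 * k) : ℝ) * y ^ k := by
  set f : ℕ → ℝ := fun k => (catalan (2 * k) : ℝ) * y ^ k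
  set r := 16 * |y|
  have hs : Summable fun k => ‖f (k + 1)‖ :=
    (summable_nat_add_iff (f := fun k => ‖f k‖) 1).mpr
      (summable_norm_catalan_two_mul_mul_pow (by rw [Real.norm_eq_abs]; linarith))
  have hgeom : Summable fun k : ℕ => r * r ^ k :=
    (summable_geometric_of_lt_one (by positivity) (by linarith)).mul_left r
  have htail : |∑' k, f (k + 1)| ≤ r / (1 - r) :=
    calc |∑' k, f (k + 1)| ≤ ∑' k, ‖f (k + 1)‖ := norm_tsum_le_tsum_norm hs
      _ ≤ ∑' k : ℕ, r * r ^ k := hs.tsum_le_tsum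
          (fun k => (norm_catalan_two_mul_mul_pow_le y (k + 1)).trans_eq (pow_succ' r k)) hgeom
      _ = r / (1 - r) := by
          rw [tsum_mul_left, tsum_geometric_of_lt_one (by positivity) (by linarith), div_eq_mul_inv]
  have hr : r / (1 - r) < 1 := by rw [div_lt_one (by linarith)]; linarith
  rw [((summable_nat_add_iff (f := f) 1).mp hs.of_norm).tsum_eq_zero_add]
  simp only [f, mul_zero, catalan_zero, Nat.cast_one, pow_zero, one_mul]
  linarith [neg_abs_le (∑' k, f (k + 1))]

theorem sqrt_seven_series_b :
    Summable (fun k : ℕ => shiftedFactorial (1/4) k * shiftedFactorial (3/4) k / ((Nat.factorial k : ℝ) * shiftedFactorial (3/2) k) * (-(16386304 / 16781926730625) : ℝ) ^ k) ∧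
    Real.sqrt 7 = (2024 / 765 : ℝ) *
      ∑' k : ℕ, shiftedFactorial (1/4) k * shiftedFactorial (3/4) k / ((Nat.factorial k : ℝ) * shiftedFactorial (3/2) k) * (-(16386304 / 16781926730625) : ℝ) ^ k := by
  set y : ℝ := -(1024144 / 16781926730625)
  have hterm : (fun k : ℕ => shiftedFactorial (1/4) k * shiftedFactorial (3/4) k /
      ((Nat.factorial k : ℝ) * shiftedFactorial (3/2) k) * (-(16386304 / 16781926730625) : ℝ) ^ k) =
      fun k => (catalan (2 * k) : ℝ) * y ^ k := by
    ext k
    rw [shiftedFactorial_quarter_div_eq_catalan, div_mul_eq_mul_div, mul_div_assoc, ← div_pow]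
    congr 2
    norm_num [y]
  have hy : 32 * |y| < 1 := by norm_num [y, abs_of_neg]
  rw [hterm]
  have hy16 : 16 * ‖y‖ < 1 := by rw [Real.norm_eq_abs]; linarith
  refine ⟨(summable_norm_catalan_two_mul_mul_pow hy16).of_norm, ?_⟩
  set A := ∑' k, (catalan (2 * k) : ℝ) * y ^ k
  have hquartic : A ^ 2 - 1 = 4 * y * A ^ 4 := catalan_two_mul_tsum_sq_sub_one (by linarith)
  have hA2 : A ^ 2 = 4096575 / 4096576 := by
    have hfactor : (A ^ 2 - 4096575 / 4096576) * (A ^ 2 + 4096575) = 0 := by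
      linear_combination (16781926730625 / 4096576 : ℝ) * hquartic
    exact sub_eq_zero.mp ((mul_eq_zero.mp hfactor).resolve_right (by positivity))
  have hA : 0 < A := catalan_two_mul_tsum_pos hy
  rw [← Real.sqrt_sq (by positivity : 0 ≤ 2024 / 765 * A), mul_pow, hA2]
  norm_num
end
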